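/- For every integer k ≥ 1 and every ε > 0 there exists a constant C = C(k, ε) such that the following holds for all integers M ≥ 1, N ≥ 2, every integer K, every real A > 0, and every collection of complex numbers α_{a,n} (indexed by integers n with 1 ≤ n ≤ N and a with 1 ≤ a ≤ n^k, gcd(a,n) = 1) satisfying |α_{a,n}| ≤ A: Σ_{K < m ≤ K+M} | Σ_{1 ≤ n ≤ N} Σ_{a=1, gcd(a,n)=1}^{n^k} α_{a,n} e(a m / n^k) |² ≤ C (N^{2k+2} + M N^{k+1}) N^ε A². -/

import Mathlib

open Finset

noncomputable def e (x : ℝ) : ℂ := Complex.exp (2 * Real.pi * Complex.I * x)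

lemma e_eq (x : ℝ) : e x = Complex.exp (((2 * Real.pi * x : ℝ) : ℂ) * Complex.I) := by
  unfold e; push_cast; ring_nf

lemma abs_e (x : ℝ) : ‖e x‖ = 1 := by
  rw [e_eq, Complex.norm_exp]
  simp

lemma conj_e (x : ℝ) : (starRingEnd ℂ) (e x) = e (-x) := by
  rw [e_eq, e_eq, ← Complex.exp_conj, map_mul, Complex.conj_I, Complex.conj_ofReal]
  congr 1
  push_cast
  ring

lemma e_mul (x y : ℝ) : e x * e y = e (x + y) := by
  rw [e_eq, e_eq, e_eq, ← Complex.exp_add]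
  congr 1
  push_cast
  ring

lemma e_zero : e 0 = 1 := by
  unfold e; simp

lemma e_zpow (θ : ℝ) (m : ℤ) : e (θ * m) = e θ ^ m := by
  rw [e_eq, e_eq, ← Complex.exp_int_mul]
  congr 1
  push_cast
  ring

lemma sum_Ioc_eq_range (K : ℤ) (M : ℕ) (f : ℤ → ℂ) :
    ∑ m ∈ Finset.Ioc K (K + (M : ℤ)), f m = ∑ i ∈ Finset.range M, f (K + 1 + i) := by
  apply Finset.sum_nbij' (fun m => (m - (K + 1)).toNat) (fun i => K + 1 + i)
  · intro m hm
    simp only [Finset.mem_Ioc] at hm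
    simp only [Finset.mem_range]
    omega
  · intro i hi
    simp only [Finset.mem_range] at hi
    simp only [Finset.mem_Ioc]
    omega
  · intro m hm
    simp only [Finset.mem_Ioc] at hm
    omega
  · intro i hi
    simp only [Finset.mem_range] at hi
    omega
  · intro m hm
    congr 1
    simp only [Finset.mem_Ioc] at hm
    omega

lemma abs_sum_Ioc_zpow {z : ℂ} (hz : ‖z‖ = 1) (hz1 : z ≠ 1) (K : ℤ) (M : ℕ) :
    ‖∑ m ∈ Finset.Ioc K (K + (M : ℤ)), z ^ m‖ ≤ 2 / ‖z - 1‖ := by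
  have hz0 : z ≠ 0 := by
    intro h; rw [h] at hz; simp at hz
  have h1 : ∑ m ∈ Finset.Ioc K (K + (M : ℤ)), z ^ m
      = z ^ (K + 1) * ∑ i ∈ Finset.range M, z ^ i := by
    rw [sum_Ioc_eq_range, Finset.mul_sum]
    apply Finset.sum_congr rfl
    intro i _
    rw [← zpow_natCast z i, ← zpow_add₀ hz0]
  rw [h1, geom_sum_eq hz1, norm_mul, norm_zpow, hz, one_zpow, one_mul, norm_div]
  have hden : 0 < ‖z - 1‖ := by
    rw [norm_pos_iff]
    exact sub_ne_zero.mpr hz1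
  apply div_le_div_of_nonneg_right ?_ hden.le
  calc ‖z ^ M - 1‖ ≤ ‖z ^ M‖ + ‖(1 : ℂ)‖ := by
        simpa using norm_sub_le (z ^ M) 1
    _ ≤ 2 := by rw [norm_pow, hz]; norm_num

lemma abs_e_sub_one (x : ℝ) (h0 : 0 ≤ x) (h1 : x ≤ 1) :
    ‖e x - 1‖ = 2 * Real.sin (Real.pi * x) := by
  have hform : e x = ((Real.cos (2 * Real.pi * x) : ℝ) : ℂ)
      + ((Real.sin (2 * Real.pi * x) : ℝ) : ℂ) * Complex.I := by
    rw [e_eq, Complex.exp_mul_I, Complex.ofReal_cos, Complex.ofReal_sin]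
  have hsin : 0 ≤ Real.sin (Real.pi * x) :=
    Real.sin_nonneg_of_nonneg_of_le_pi (by positivity)
      (by nlinarith [Real.pi_pos])
  have hsq : (‖e x - 1‖) ^ 2 = (2 * Real.sin (Real.pi * x)) ^ 2 := by
    rw [Complex.sq_norm, Complex.normSq_apply, hform]
    simp only [Complex.add_re, Complex.ofReal_re, Complex.mul_re, Complex.I_re,
      Complex.ofReal_im, Complex.I_im, Complex.sub_re, Complex.one_re,
      Complex.add_im, Complex.mul_im, Complex.sub_im, Complex.one_im]
    have hc : Real.cos (2 * Real.pi * x) = 1 - 2 * Real.sin (Real.pi * x) ^ 2 := by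
      have := Real.cos_two_mul (Real.pi * x)
      have h2 : (2 : ℝ) * (Real.pi * x) = 2 * Real.pi * x := by ring
      rw [h2] at this
      nlinarith [Real.sin_sq_add_cos_sq (Real.pi * x)]
    rw [hc]
    nlinarith [Real.sin_sq_add_cos_sq (2 * Real.pi * x)]
  have habs : 0 ≤ ‖e x - 1‖ := norm_nonneg _
  nlinarith [hsq, habs, hsin]

lemma min_le_sin (x : ℝ) (h0 : 0 ≤ x) (h1 : x ≤ 1) :
    2 * min x (1 - x) ≤ Real.sin (Real.pi * x) := by
  rcases le_or_gt x (1/2) with hc | hc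
  · have hmin : min x (1 - x) = x := min_eq_left (by linarith)
    rw [hmin]
    have := Real.mul_le_sin (x := Real.pi * x) (by positivity)
      (by nlinarith [Real.pi_pos])
    have hpi : (2 / Real.pi) * (Real.pi * x) = 2 * x := by
      field_simp
    rw [hpi] at this
    linarith
  · have hmin : min x (1 - x) = 1 - x := min_eq_right (by linarith)
    rw [hmin]
    have hflip : Real.sin (Real.pi * x) = Real.sin (Real.pi * (1 - x)) := by
      rw [← Real.sin_pi_sub]
      congr 1
      ring
    rw [hflip]
    have := Real.mul_le_sin (x := Real.pi * (1 - x)) (by nlinarith [Real.pi_pos])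
      (by nlinarith [Real.pi_pos])
    have hpi : (2 / Real.pi) * (Real.pi * (1 - x)) = 2 * (1 - x) := by
      field_simp
    rw [hpi] at this
    linarith

lemma abs_sum_e_le_pos (K : ℤ) (M Q : ℕ) (d : ℤ) (hQ : 0 < Q) (hd0 : 0 < d)
    (hdQ : d < (Q : ℤ)) :
    ‖∑ m ∈ Finset.Ioc K (K + (M : ℤ)), e (((d : ℝ) / (Q : ℝ)) * m)‖ ≤
      (Q : ℝ) / (2 * (min d.natAbs (Q - d.natAbs) : ℕ)) := by
  set a : ℕ := d.natAbs with ha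
  have hda : (d : ℝ) = (a : ℕ) := by
    have h2 : (a : ℤ) = d := Int.natAbs_of_nonneg hd0.le
    exact_mod_cast h2.symm
  have ha1 : 1 ≤ a := by omega
  have haQ : a < Q := by omega
  set x : ℝ := (d : ℝ) / (Q : ℝ) with hx
  have hQR : (0 : ℝ) < Q := by positivity
  have hx0 : 0 < x := by
    rw [hx, hda]; positivity
  have hx1 : x < 1 := by
    rw [hx, hda, div_lt_one hQR]
    exact_mod_cast haQ
  have hmin : min x (1 - x) = ((min a (Q - a) : ℕ) : ℝ) / Q := by
    rw [hx, hda]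
    push_cast [Nat.cast_min, Nat.cast_sub haQ.le]
    rw [← min_div_div_right hQR.le]
    congr 1
    field_simp
  have hminpos : (0 : ℝ) < ((min a (Q - a) : ℕ) : ℝ) := by
    have : 1 ≤ min a (Q - a) := by omega
    exact_mod_cast Nat.lt_of_lt_of_le Nat.zero_lt_one this
  have hlow : 4 * min x (1 - x) ≤ ‖e x - 1‖ := by
    rw [abs_e_sub_one x hx0.le hx1.le]
    have := min_le_sin x hx0.le hx1.le
    linarith
  have hne1 : e x ≠ 1 := by
    intro h
    rw [h] at hlow
    simp only [sub_self, norm_zero] at hlow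
    rw [hmin] at hlow
    have := div_pos hminpos hQR
    linarith
  have hsum : ∑ m ∈ Finset.Ioc K (K + (M : ℤ)), e (x * m)
      = ∑ m ∈ Finset.Ioc K (K + (M : ℤ)), (e x) ^ m := by
    apply Finset.sum_congr rfl
    intro m _
    exact e_zpow x m
  calc ‖∑ m ∈ Finset.Ioc K (K + (M : ℤ)), e (x * m)‖
      ≤ 2 / ‖e x - 1‖ := by
        rw [hsum]; exact abs_sum_Ioc_zpow (abs_e x) hne1 K M
    _ ≤ 2 / (4 * min x (1 - x)) := by
        apply div_le_div_of_nonneg_left (by norm_num) ?_ hlow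
        rw [hmin]; positivity
    _ = (Q : ℝ) / (2 * (min a (Q - a) : ℕ)) := by
        rw [hmin]
        field_simp
        ring

lemma abs_sum_e_le (K : ℤ) (M Q : ℕ) (d : ℤ) (hQ : 0 < Q) (hd0 : d ≠ 0)
    (hdQ : d.natAbs < Q) :
    ‖∑ m ∈ Finset.Ioc K (K + (M : ℤ)), e (((d : ℝ) / (Q : ℝ)) * m)‖ ≤
      (Q : ℝ) / (2 * (min d.natAbs (Q - d.natAbs) : ℕ)) := by
  rcases lt_or_gt_of_ne hd0 with hneg | hpos
  · have key := abs_sum_e_le_pos K M Q (-d) hQ (by omega) (by omega)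
    have hconj : ∑ m ∈ Finset.Ioc K (K + (M : ℤ)), e ((((-d : ℤ) : ℝ) / (Q : ℝ)) * m)
        = (starRingEnd ℂ) (∑ m ∈ Finset.Ioc K (K + (M : ℤ)), e (((d : ℝ) / (Q : ℝ)) * m)) := by
      rw [map_sum]
      apply Finset.sum_congr rfl
      intro m _
      rw [conj_e]
      congr 1
      push_cast
      ring
    rw [hconj, Complex.norm_conj] at key
    simpa [Int.natAbs_neg] using key
  · exact abs_sum_e_le_pos K M Q d hQ hpos (by omega)

lemma card_le_of_pairwise_dvd {q g m : ℕ} (hm : 0 < m) (hqm : q ≤ m * g)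
    (s : Finset ℕ) (hs : ∀ x ∈ s, x ∈ Finset.Icc 1 q)
    (hp : ∀ x ∈ s, ∀ y ∈ s, x ≤ y → m ∣ y - x) : s.card ≤ g := by
  rcases s.eq_empty_or_nonempty with rfl | hne
  · simp
  · have hb : s.min' hne ∈ s := s.min'_mem hne
    set b := s.min' hne with hbdef
    have hcard : s.card ≤ (Finset.range g).card := by
      apply Finset.card_le_card_of_injOn (fun x => (x - b) / m)
      · intro x hx
        simp only [Finset.mem_range]
        have hxb : b ≤ x := s.min'_le x hx
        obtain ⟨t, ht⟩ := hp b hb x hx hxb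
        have hx1 := hs x hx
        have hb1 := hs b hb
        simp only [Finset.mem_Icc] at hx1 hb1
        have : (x - b) / m = t := by rw [ht]; exact Nat.mul_div_cancel_left t hm
        rw [this]
        -- m * t = x - b ≤ q - 1 < m * g
        by_contra hcon
        replace hcon : g ≤ t := by simpa using hcon
        have : m * g ≤ m * t := Nat.mul_le_mul_left m hcon
        omega
      · intro x hx y hy hxy
        have hxb : b ≤ x := s.min'_le x hx
        have hyb : b ≤ y := s.min'_le y hy
        obtain ⟨t, ht⟩ := hp b hb x hx hxb
        obtain ⟨u, hu⟩ := hp b hb y hy hyb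
        have h1 : (x - b) / m = t := by rw [ht]; exact Nat.mul_div_cancel_left t hm
        have h2 : (y - b) / m = u := by rw [hu]; exact Nat.mul_div_cancel_left u hm
        simp only at hxy
        rw [h1, h2] at hxy
        rw [← hxy] at hu
        omega
    simpa using hcard

lemma card_fiber_eq_d {q q' : ℕ} (hq : 0 < q) (hq' : 0 < q') (v : ℤ) (s : Finset (ℕ × ℕ))
    (hs : ∀ p ∈ s, p.1 ∈ Finset.Icc 1 q ∧ p.2 ∈ Finset.Icc 1 q')
    (hv : ∀ p ∈ s, (p.1 : ℤ) * (q' : ℤ) - (p.2 : ℤ) * (q : ℤ) = v) :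
    s.card ≤ Nat.gcd q q' := by
  set g := Nat.gcd q q' with hg
  have hgpos : 0 < g := Nat.gcd_pos_of_pos_left q' hq
  have hgq : g ∣ q := Nat.gcd_dvd_left q q'
  have hgq' : g ∣ q' := Nat.gcd_dvd_right q q'
  have hinj : Set.InjOn Prod.fst (s : Set (ℕ × ℕ)) := by
    intro p hp r hr h
    have e1 := hv p hp
    have e2 := hv r hr
    have h2 : (p.2 : ℤ) * q = (r.2 : ℤ) * q := by
      rw [h] at e1
      linarith [e1, e2]
    have hqz : (q : ℤ) ≠ 0 := by exact_mod_cast hq.ne'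
    have : (p.2 : ℤ) = (r.2 : ℤ) := mul_right_cancel₀ hqz h2
    have : p.2 = r.2 := by exact_mod_cast this
    exact Prod.ext h this
  rw [← Finset.card_image_of_injOn hinj]
  apply card_le_of_pairwise_dvd (m := q / g)
    (Nat.div_pos (Nat.le_of_dvd hq hgq) hgpos)
    (le_of_eq (Nat.div_mul_cancel hgq).symm)
  · intro x hx
    obtain ⟨p, hp, rfl⟩ := Finset.mem_image.mp hx
    exact (hs p hp).1
  · intro x hx y hy hxy
    obtain ⟨p, hp, rfl⟩ := Finset.mem_image.mp hx
    obtain ⟨r, hr, rfl⟩ := Finset.mem_image.mp hy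
    have e1 := hv p hp
    have e2 := hv r hr
    -- (r.1 - p.1) * q' = (r.2 - p.2) * q
    have hkey : ((r.1 : ℤ) - p.1) * (q' : ℤ) = ((r.2 : ℤ) - p.2) * q := by ring_nf; linarith [e1, e2]
    have hcop : IsCoprime ((q / g : ℕ) : ℤ) ((q' / g : ℕ) : ℤ) := by
      rw [Nat.isCoprime_iff_coprime]
      exact Nat.coprime_div_gcd_div_gcd hgpos
    have hq_split : (q : ℤ) = (g : ℤ) * ((q / g : ℕ) : ℤ) := by
      exact_mod_cast (Nat.mul_div_cancel' hgq).symm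
    have hq'_split : (q' : ℤ) = (g : ℤ) * ((q' / g : ℕ) : ℤ) := by
      exact_mod_cast (Nat.mul_div_cancel' hgq').symm
    have hgz : (g : ℤ) ≠ 0 := by exact_mod_cast hgpos.ne'
    have hkey2 : ((r.1 : ℤ) - p.1) * ((q' / g : ℕ) : ℤ) = ((r.2 : ℤ) - p.2) * ((q / g : ℕ) : ℤ) := by
      apply mul_left_cancel₀ hgz
      rw [hq_split, hq'_split] at hkey
      linarith [hkey]
    have hdvd : ((q / g : ℕ) : ℤ) ∣ ((r.1 : ℤ) - p.1) := by
      apply hcop.dvd_of_dvd_mul_right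
      exact ⟨(r.2 : ℤ) - p.2, by linarith [hkey2]⟩
    have : ((q / g : ℕ) : ℤ) ∣ ((r.1 - p.1 : ℕ) : ℤ) := by
      rwa [Int.ofNat_sub hxy]
    exact_mod_cast this

lemma harmonic_le (J : ℕ) : ∑ j ∈ Finset.Icc 1 J, (1 / (j : ℝ)) ≤ 1 + Real.log J := by
  induction J with
  | zero => simp
  | succ J ih =>
    rcases Nat.eq_zero_or_pos J with rfl | hJ
    · norm_num
    · rw [Finset.sum_Icc_succ_top (by omega)]
      have hJR : (0 : ℝ) < J := by exact_mod_cast hJ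
      have hlog : Real.log J + 1 / ((J : ℝ) + 1) ≤ Real.log ((J : ℝ) + 1) := by
        have hd := Real.log_le_sub_one_of_pos (x := (J : ℝ) / ((J : ℝ) + 1)) (by positivity)
        rw [Real.log_div hJR.ne' (by positivity)] at hd
        have : (J : ℝ) / ((J : ℝ) + 1) - 1 = -(1 / ((J : ℝ) + 1)) := by
          field_simp
          ring
        rw [this] at hd
        linarith
      push_cast
      linarith

lemma log_le_rpow_div {x ε : ℝ} (hx : 1 ≤ x) (hε : 0 < ε) :
    Real.log x ≤ x ^ ε / ε := by
  have h := Real.log_le_sub_one_of_pos (x := x ^ ε) (by positivity)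
  rw [Real.log_rpow (by linarith)] at h
  rw [le_div_iff₀ hε]
  nlinarith

lemma inner_off_bound (k : ℕ) (hk : 1 ≤ k) (K : ℤ) (M : ℕ) (n n' : ℕ)
    (hn : 1 ≤ n) (hn' : 1 ≤ n') :
    ∑ a ∈ (Finset.Icc 1 (n ^ k)).filter (fun a => Nat.gcd a n = 1),
      ∑ a' ∈ (Finset.Icc 1 (n' ^ k)).filter (fun a => Nat.gcd a n' = 1),
        (if n = n' ∧ a = a' then 0 else
          ‖∑ m ∈ Finset.Ioc K (K + (M : ℤ)),
            e (((a : ℝ) / (n : ℝ) ^ k - (a' : ℝ) / (n' : ℝ) ^ k) * m)‖)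
      ≤ 2 * ((n : ℝ) ^ k * (n' : ℝ) ^ k) * (1 + Real.log ((n : ℝ) ^ k * (n' : ℝ) ^ k)) := by
  classical
  set q := n ^ k with hqdef
  set q' := n' ^ k with hq'def
  set Q := q * q' with hQdef
  set g := Nat.gcd q q' with hgdef
  have hq : 0 < q := Nat.pow_pos hn
  have hq' : 0 < q' := Nat.pow_pos hn'
  have hQ : 0 < Q := Nat.mul_pos hq hq'
  have hgpos : 0 < g := Nat.gcd_pos_of_pos_left q' hq
  have hgq : g ∣ q := Nat.gcd_dvd_left q q'
  have hgq' : g ∣ q' := Nat.gcd_dvd_right q q'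
  have hgQ : g ∣ Q := Dvd.dvd.mul_right hgq q'
  set Fn := (Finset.Icc 1 q).filter (fun a => Nat.gcd a n = 1) with hFn
  set Fn' := (Finset.Icc 1 q').filter (fun a => Nat.gcd a n' = 1) with hFn'
  set dz : ℕ × ℕ → ℤ := fun aa => (aa.1 : ℤ) * (q' : ℤ) - (aa.2 : ℤ) * (q : ℤ) with hdz
  set D0 : ℕ × ℕ → ℕ := fun aa => min (dz aa).natAbs (Q - (dz aa).natAbs) with hD0
  set s0 := (Fn ×ˢ Fn').filter (fun aa => ¬(n = n' ∧ aa.1 = aa.2)) with hs0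
  -- basic membership facts
  have hmem : ∀ aa ∈ s0, (1 ≤ aa.1 ∧ aa.1 ≤ q ∧ Nat.gcd aa.1 n = 1) ∧
      (1 ≤ aa.2 ∧ aa.2 ≤ q' ∧ Nat.gcd aa.2 n' = 1) ∧ ¬(n = n' ∧ aa.1 = aa.2) := by
    intro aa ha
    rw [hs0, Finset.mem_filter, Finset.mem_product, hFn, hFn'] at ha
    obtain ⟨⟨h1, h2⟩, h3⟩ := ha
    rw [Finset.mem_filter, Finset.mem_Icc] at h1 h2
    exact ⟨⟨h1.1.1, h1.1.2, h1.2⟩, ⟨h2.1.1, h2.1.2, h2.2⟩, h3⟩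
  -- nonvanishing of dz
  have hdz_ne : ∀ aa ∈ s0, dz aa ≠ 0 := by
    intro aa ha hzero
    obtain ⟨⟨ha1, ha2, hacop⟩, ⟨hb1, hb2, hbcop⟩, hne⟩ := hmem aa ha
    have heq : aa.1 * q' = aa.2 * q := by
      have : (aa.1 : ℤ) * (q' : ℤ) = (aa.2 : ℤ) * (q : ℤ) := by
        rw [hdz] at hzero; simp only at hzero; linarith [hzero]
      exact_mod_cast this
    have hcop1 : Nat.Coprime aa.1 q := by
      rw [hqdef]; exact (Nat.coprime_iff_gcd_eq_one.mpr hacop).pow_right k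
    have hcop2 : Nat.Coprime aa.2 q' := by
      rw [hq'def]; exact (Nat.coprime_iff_gcd_eq_one.mpr hbcop).pow_right k
    have hdvd1 : q ∣ q' := by
      have h1 : q ∣ aa.1 * q' := ⟨aa.2, by rw [heq]; ring⟩
      exact (Nat.Coprime.dvd_of_dvd_mul_left (Nat.Coprime.symm hcop1) h1)
    have hdvd2 : q' ∣ q := by
      have h1 : q' ∣ aa.2 * q := ⟨aa.1, by rw [← heq]; ring⟩
      exact (Nat.Coprime.dvd_of_dvd_mul_left (Nat.Coprime.symm hcop2) h1)
    have hqq' : q = q' := Nat.dvd_antisymm hdvd1 hdvd2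
    have hnn' : n = n' := Nat.pow_left_injective (by omega) hqq'
    have haa : aa.1 = aa.2 := by
      have : aa.1 * q' = aa.2 * q' := by rw [heq, hqq']
      exact Nat.eq_of_mul_eq_mul_right hq' this
    exact hne ⟨hnn', haa⟩
  -- size of dz
  have hdz_lt : ∀ aa ∈ s0, (dz aa).natAbs < Q := by
    intro aa ha
    obtain ⟨⟨ha1, ha2, _⟩, ⟨hb1, hb2, _⟩, _⟩ := hmem aa ha
    have h1 : (aa.1 : ℤ) * (q' : ℤ) ≤ (q : ℤ) * (q' : ℤ) := by
      apply mul_le_mul_of_nonneg_right _ (by positivity)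
      exact_mod_cast ha2
    have h2 : (q : ℤ) ≤ (aa.2 : ℤ) * (q : ℤ) := by
      apply le_mul_of_one_le_left (by positivity)
      exact_mod_cast hb1
    have h3 : (aa.2 : ℤ) * (q : ℤ) ≤ (q' : ℤ) * (q : ℤ) := by
      apply mul_le_mul_of_nonneg_right _ (by positivity)
      exact_mod_cast hb2
    have h4 : (q' : ℤ) ≤ (aa.1 : ℤ) * (q' : ℤ) := by
      apply le_mul_of_one_le_left (by positivity)
      exact_mod_cast ha1
    have hQz : (Q : ℤ) = (q : ℤ) * (q' : ℤ) := by rw [hQdef]; push_cast; ring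
    have hub : dz aa < (Q : ℤ) := by
      rw [hdz]; simp only
      have hqz : (0 : ℤ) < (q : ℤ) := by exact_mod_cast hq
      linarith
    have hlb : -(Q : ℤ) < dz aa := by
      rw [hdz]; simp only
      have hqz : (0 : ℤ) < (q' : ℤ) := by exact_mod_cast hq'
      linarith
    omega
  -- divisibility of D0
  have hg_dvd_na : ∀ aa ∈ s0, g ∣ (dz aa).natAbs := by
    intro aa ha
    have hgz : (g : ℤ) ∣ dz aa := by
      rw [hdz]
      apply dvd_sub
      · exact Dvd.dvd.mul_left (Int.natCast_dvd_natCast.mpr hgq') _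
      · exact Dvd.dvd.mul_left (Int.natCast_dvd_natCast.mpr hgq) _
    have := Int.natAbs_dvd_natAbs.mpr hgz
    simpa using this
  have hD0_dvd : ∀ aa ∈ s0, g ∣ D0 aa := by
    intro aa ha
    rw [hD0]; simp only
    rcases min_cases (dz aa).natAbs (Q - (dz aa).natAbs) with ⟨h, _⟩ | ⟨h, _⟩
    · rw [h]; exact hg_dvd_na aa ha
    · rw [h]; exact Nat.dvd_sub hgQ (hg_dvd_na aa ha)
  have hD0_pos : ∀ aa ∈ s0, 1 ≤ D0 aa := by
    intro aa ha
    have h1 := hdz_ne aa ha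
    have h2 := hdz_lt aa ha
    rw [hD0]; simp only
    omega
  have hD0_le : ∀ aa ∈ s0, D0 aa ≤ Q := by
    intro aa ha
    rw [hD0]; simp only
    omega
  -- pointwise bound on each exponential sum
  have hTbound : ∀ aa ∈ s0,
      ‖∑ m ∈ Finset.Ioc K (K + (M : ℤ)),
        e (((aa.1 : ℝ) / (n : ℝ) ^ k - (aa.2 : ℝ) / (n' : ℝ) ^ k) * m)‖
      ≤ (Q : ℝ) / (2 * (D0 aa : ℝ)) := by
    intro aa ha
    have hθ : ((aa.1 : ℝ) / (n : ℝ) ^ k - (aa.2 : ℝ) / (n' : ℝ) ^ k)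
        = ((dz aa : ℤ) : ℝ) / (Q : ℝ) := by
      have hqr : ((q : ℕ) : ℝ) = (n : ℝ) ^ k := by rw [hqdef]; push_cast; ring
      have hq'r : ((q' : ℕ) : ℝ) = (n' : ℝ) ^ k := by rw [hq'def]; push_cast; ring
      have hqne : (n : ℝ) ^ k ≠ 0 := by positivity
      have hq'ne : (n' : ℝ) ^ k ≠ 0 := by positivity
      rw [hdz, hQdef]
      push_cast
      rw [hqr, hq'r]
      field_simp
    rw [hθ]
    have := abs_sum_e_le K M Q (dz aa) hQ (hdz_ne aa ha) (hdz_lt aa ha)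
    convert this using 3
  -- rewrite the double sum as a sum over the off-diagonal set s0
  have hstep1 : ∑ a ∈ Fn, ∑ a' ∈ Fn', (if n = n' ∧ a = a' then 0 else
      ‖∑ m ∈ Finset.Ioc K (K + (M : ℤ)),
        e (((a : ℝ) / (n : ℝ) ^ k - (a' : ℝ) / (n' : ℝ) ^ k) * m)‖)
      = ∑ aa ∈ s0, ‖∑ m ∈ Finset.Ioc K (K + (M : ℤ)),
          e (((aa.1 : ℝ) / (n : ℝ) ^ k - (aa.2 : ℝ) / (n' : ℝ) ^ k) * m)‖ := by
    rw [← Finset.sum_product', hs0, Finset.sum_filter]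
    apply Finset.sum_congr rfl
    intro aa _
    by_cases h : n = n' ∧ aa.1 = aa.2
    · simp [h]
    · simp [h]
  have hmaps : ∀ aa ∈ s0, D0 aa / g ∈ Finset.Icc 1 Q := by
    intro aa ha
    rw [Finset.mem_Icc]
    constructor
    · rw [Nat.one_le_div_iff hgpos]
      exact Nat.le_of_dvd (hD0_pos aa ha) (hD0_dvd aa ha)
    · exact (Nat.div_le_self _ _).trans (hD0_le aa ha)
  have hD0eq : ∀ j, ∀ aa ∈ s0.filter (fun aa => D0 aa / g = j), D0 aa = g * j := by
    intro j aa ha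
    rw [Finset.mem_filter] at ha
    obtain ⟨ha0, haj⟩ := ha
    obtain ⟨c, hc⟩ := hD0_dvd aa ha0
    have : D0 aa / g = c := by rw [hc]; exact Nat.mul_div_cancel_left c hgpos
    rw [hc, ← haj, this]
  have hfiber : ∀ j ∈ Finset.Icc 1 Q, ∑ aa ∈ s0.filter (fun aa => D0 aa / g = j),
      (Q : ℝ) / (2 * (D0 aa : ℝ)) ≤ (2 * (Q : ℝ)) * (1 / (j : ℝ)) := by
    intro j hj
    rw [Finset.mem_Icc] at hj
    have hjpos : 0 < j := hj.1
    have hcardv : ∀ v : ℤ, ((Fn ×ˢ Fn').filter (fun aa => dz aa = v)).card ≤ g := by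
      intro v
      apply card_fiber_eq_d hq hq' v
      · intro p hp
        rw [Finset.mem_filter, Finset.mem_product, hFn, hFn'] at hp
        obtain ⟨⟨h1, h2⟩, _⟩ := hp
        rw [Finset.mem_filter] at h1 h2
        exact ⟨h1.1, h2.1⟩
      · intro p hp
        rw [Finset.mem_filter] at hp
        exact hp.2
    have hsubset : s0.filter (fun aa => D0 aa / g = j) ⊆
        ((((Fn ×ˢ Fn').filter (fun aa => dz aa = ((g * j : ℕ) : ℤ)))
        ∪ ((Fn ×ˢ Fn').filter (fun aa => dz aa = -((g * j : ℕ) : ℤ))))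
        ∪ ((Fn ×ˢ Fn').filter (fun aa => dz aa = (Q : ℤ) - ((g * j : ℕ) : ℤ))))
        ∪ ((Fn ×ˢ Fn').filter (fun aa => dz aa = ((g * j : ℕ) : ℤ) - (Q : ℤ))) := by
      intro aa ha
      have hD0j := hD0eq j aa ha
      rw [Finset.mem_filter] at ha
      obtain ⟨ha0, _⟩ := ha
      have haa' : aa ∈ Fn ×ˢ Fn' := Finset.mem_of_mem_filter aa ha0
      have hlt := hdz_lt aa ha0
      have hmineq : min (dz aa).natAbs (Q - (dz aa).natAbs) = g * j := by
        rw [hD0] at hD0j; exact hD0j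
      have h5 : dz aa = ((g * j : ℕ) : ℤ) ∨ dz aa = -((g * j : ℕ) : ℤ)
          ∨ dz aa = (Q : ℤ) - ((g * j : ℕ) : ℤ) ∨ dz aa = ((g * j : ℕ) : ℤ) - (Q : ℤ) := by
        omega
      rcases h5 with h | h | h | h
      · exact Finset.mem_union_left _ (Finset.mem_union_left _
          (Finset.mem_union_left _ (Finset.mem_filter.mpr ⟨haa', h⟩)))
      · exact Finset.mem_union_left _ (Finset.mem_union_left _
          (Finset.mem_union_right _ (Finset.mem_filter.mpr ⟨haa', h⟩)))
      · exact Finset.mem_union_left _ (Finset.mem_union_right _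
          (Finset.mem_filter.mpr ⟨haa', h⟩))
      · exact Finset.mem_union_right _ (Finset.mem_filter.mpr ⟨haa', h⟩)
    have hcard : (s0.filter (fun aa => D0 aa / g = j)).card ≤ 4 * g := by
      calc (s0.filter (fun aa => D0 aa / g = j)).card
          ≤ _ := Finset.card_le_card hsubset
        _ ≤ 4 * g := by
            have c1 := hcardv ((g * j : ℕ) : ℤ)
            have c2 := hcardv (-((g * j : ℕ) : ℤ))
            have c3 := hcardv ((Q : ℤ) - ((g * j : ℕ) : ℤ))
            have c4 := hcardv (((g * j : ℕ) : ℤ) - (Q : ℤ))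
            have u1 := Finset.card_union_le
              ((((Fn ×ˢ Fn').filter (fun aa => dz aa = ((g * j : ℕ) : ℤ)))
                ∪ ((Fn ×ˢ Fn').filter (fun aa => dz aa = -((g * j : ℕ) : ℤ))))
                ∪ ((Fn ×ˢ Fn').filter (fun aa => dz aa = (Q : ℤ) - ((g * j : ℕ) : ℤ))))
              ((Fn ×ˢ Fn').filter (fun aa => dz aa = ((g * j : ℕ) : ℤ) - (Q : ℤ)))
            have u2 := Finset.card_union_le
              ((((Fn ×ˢ Fn').filter (fun aa => dz aa = ((g * j : ℕ) : ℤ)))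
                ∪ ((Fn ×ˢ Fn').filter (fun aa => dz aa = -((g * j : ℕ) : ℤ)))))
              ((Fn ×ˢ Fn').filter (fun aa => dz aa = (Q : ℤ) - ((g * j : ℕ) : ℤ)))
            have u3 := Finset.card_union_le
              (((Fn ×ˢ Fn').filter (fun aa => dz aa = ((g * j : ℕ) : ℤ))))
              ((Fn ×ˢ Fn').filter (fun aa => dz aa = -((g * j : ℕ) : ℤ)))
            omega
    have hterm : ∀ aa ∈ s0.filter (fun aa => D0 aa / g = j),
        (Q : ℝ) / (2 * (D0 aa : ℝ)) = (Q : ℝ) / (2 * ((g * j : ℕ) : ℝ)) := by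
      intro aa ha
      rw [hD0eq j aa ha]
    rw [Finset.sum_congr rfl hterm, Finset.sum_const, nsmul_eq_mul]
    have hnonneg : (0 : ℝ) ≤ (Q : ℝ) / (2 * ((g * j : ℕ) : ℝ)) := by positivity
    calc ((s0.filter (fun aa => D0 aa / g = j)).card : ℝ) * ((Q : ℝ) / (2 * ((g * j : ℕ) : ℝ)))
        ≤ (4 * g : ℝ) * ((Q : ℝ) / (2 * ((g * j : ℕ) : ℝ))) := by
          apply mul_le_mul_of_nonneg_right _ hnonneg
          exact_mod_cast hcard
      _ = (2 * (Q : ℝ)) * (1 / (j : ℝ)) := by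
          have hgR : ((g : ℕ) : ℝ) ≠ 0 := by positivity
          have hjR : ((j : ℕ) : ℝ) ≠ 0 := by positivity
          push_cast
          field_simp
          ring
  rw [hstep1]
  calc ∑ aa ∈ s0, ‖∑ m ∈ Finset.Ioc K (K + (M : ℤ)),
          e (((aa.1 : ℝ) / (n : ℝ) ^ k - (aa.2 : ℝ) / (n' : ℝ) ^ k) * m)‖
      ≤ ∑ aa ∈ s0, (Q : ℝ) / (2 * (D0 aa : ℝ)) := Finset.sum_le_sum hTbound
    _ = ∑ j ∈ Finset.Icc 1 Q, ∑ aa ∈ s0.filter (fun aa => D0 aa / g = j),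
          (Q : ℝ) / (2 * (D0 aa : ℝ)) :=
        (Finset.sum_fiberwise_of_maps_to hmaps _).symm
    _ ≤ ∑ j ∈ Finset.Icc 1 Q, (2 * (Q : ℝ)) * (1 / (j : ℝ)) := Finset.sum_le_sum hfiber
    _ = (2 * (Q : ℝ)) * ∑ j ∈ Finset.Icc 1 Q, (1 / (j : ℝ)) := by rw [Finset.mul_sum]
    _ ≤ (2 * (Q : ℝ)) * (1 + Real.log Q) := by
        apply mul_le_mul_of_nonneg_left (harmonic_le Q) (by positivity)
    _ = 2 * ((n : ℝ) ^ k * (n' : ℝ) ^ k) * (1 + Real.log ((n : ℝ) ^ k * (n' : ℝ) ^ k)) := by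
        have hQR : ((Q : ℕ) : ℝ) = (n : ℝ) ^ k * (n' : ℝ) ^ k := by
          rw [hQdef, hqdef, hq'def]; push_cast; ring
        rw [hQR]
lemma assemble_ineq (kR X Y t L c : ℝ) (hk : 0 ≤ kR) (hX : 0 ≤ X) (hY : 0 ≤ Y) (ht : 1 ≤ t)
    (hL : 0 ≤ L) (hc : 0 ≤ c) (h3 : 4 * kR * (X * L) ≤ c * (X * t)) :
    Y + 2 * X * (1 + 2 * kR * L) ≤ (3 + c) * (X + Y) * t := by
  have h1 : Y * 1 ≤ Y * t := mul_le_mul_of_nonneg_left ht hY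
  have h2 : X * 1 ≤ X * t := mul_le_mul_of_nonneg_left ht hX
  have h4 : 0 ≤ c * (Y * t) := mul_nonneg hc (mul_nonneg hY (zero_le_one.trans ht))
  have h5 : 0 ≤ X * t := mul_nonneg hX (zero_le_one.trans ht)
  have h6 : 0 ≤ Y * t := mul_nonneg hY (zero_le_one.trans ht)
  nlinarith [h1, h2, h3, h4, h5, h6]

set_option maxHeartbeats 1000000 in
theorem l2_dual_large_sieve_power_moduli
    (k : ℕ) (hk : 1 ≤ k) (ε : ℝ) (hε : 0 < ε) :
    ∃ C : ℝ, 0 < C ∧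
      ∀ M N : ℕ, 1 ≤ M → 2 ≤ N → ∀ K : ℤ, ∀ A : ℝ, 0 < A → ∀ α : ℕ → ℕ → ℂ,
        (∀ n a : ℕ, 1 ≤ n → n ≤ N → 1 ≤ a → a ≤ n ^ k → Nat.gcd a n = 1 →
          ‖α a n‖ ≤ A) →
        ∑ m ∈ Finset.Ioc K (K + M),
          ‖∑ n ∈ Finset.Icc 1 N,
            ∑ a ∈ (Finset.Icc 1 (n ^ k)).filter (fun a => Nat.gcd a n = 1),
              α a n * e ((a : ℝ) * (m : ℝ) / (n : ℝ) ^ k)‖ ^ 2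
        ≤ C * ((N : ℝ) ^ (2 * k + 2) + (M : ℝ) * (N : ℝ) ^ (k + 1)) * (N : ℝ) ^ ε * A ^ 2 := by
  classical
  refine ⟨3 + 4 * k / ε, by positivity, ?_⟩
  intro M N hM hN K A hA α hα
  set F : ℕ → Finset ℕ := fun n => (Finset.Icc 1 (n ^ k)).filter (fun a => Nat.gcd a n = 1)
    with hF
  set P : Finset (Σ _ : ℕ, ℕ) := (Finset.Icc 1 N).sigma F with hP
  set T : (Σ _ : ℕ, ℕ) → (Σ _ : ℕ, ℕ) → ℝ := fun p q =>
    ‖∑ m ∈ Finset.Ioc K (K + (M : ℤ)),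
      e (((p.2 : ℝ) / (p.1 : ℝ) ^ k - (q.2 : ℝ) / (q.1 : ℝ) ^ k) * m)‖ with hT
  -- membership facts
  have hmemP : ∀ p ∈ P, 1 ≤ p.1 ∧ p.1 ≤ N ∧ 1 ≤ p.2 ∧ p.2 ≤ p.1 ^ k ∧ Nat.gcd p.2 p.1 = 1 := by
    intro p hp
    rw [hP, Finset.mem_sigma] at hp
    obtain ⟨h1, h2⟩ := hp
    rw [Finset.mem_Icc] at h1
    rw [hF, Finset.mem_filter, Finset.mem_Icc] at h2
    exact ⟨h1.1, h1.2, h2.1.1, h2.1.2, h2.2⟩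
  -- Step 1: expansion of the square
  have hexpand : ∀ m : ℤ,
      ‖∑ n ∈ Finset.Icc 1 N, ∑ a ∈ F n, α a n * e ((a : ℝ) * (m : ℝ) / (n : ℝ) ^ k)‖ ^ 2
      = ∑ p ∈ P, ∑ q ∈ P, ((α p.2 p.1 * (starRingEnd ℂ) (α q.2 q.1)) *
          e (((p.2 : ℝ) / (p.1 : ℝ) ^ k - (q.2 : ℝ) / (q.1 : ℝ) ^ k) * m)).re := by
    intro m
    have hS : ∑ n ∈ Finset.Icc 1 N, ∑ a ∈ F n, α a n * e ((a : ℝ) * (m : ℝ) / (n : ℝ) ^ k)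
        = ∑ p ∈ P, α p.2 p.1 * e ((p.2 : ℝ) * (m : ℝ) / (p.1 : ℝ) ^ k) := by
      rw [hP, Finset.sum_sigma]
    rw [hS, Complex.sq_norm]
    have h1 : ∀ z : ℂ, Complex.normSq z = (z * (starRingEnd ℂ) z).re := by
      intro z; rw [Complex.mul_conj]; simp
    rw [h1, map_sum, Finset.sum_mul_sum, Complex.re_sum]
    apply Finset.sum_congr rfl
    intro p _
    rw [Complex.re_sum]
    apply Finset.sum_congr rfl
    intro q _
    congr 1
    rw [map_mul, conj_e, mul_mul_mul_comm, e_mul]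
    congr 2
    push_cast
    ring
  -- Step 2: LHS bounded by A^2 * double sum of T
  have hstep2 : ∑ m ∈ Finset.Ioc K (K + (M : ℤ)),
      ‖∑ n ∈ Finset.Icc 1 N, ∑ a ∈ F n,
        α a n * e ((a : ℝ) * (m : ℝ) / (n : ℝ) ^ k)‖ ^ 2
      ≤ A ^ 2 * ∑ p ∈ P, ∑ q ∈ P, T p q := by
    have h0 : ∑ m ∈ Finset.Ioc K (K + (M : ℤ)),
        ‖∑ n ∈ Finset.Icc 1 N, ∑ a ∈ F n,
          α a n * e ((a : ℝ) * (m : ℝ) / (n : ℝ) ^ k)‖ ^ 2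
        = ∑ p ∈ P, ∑ q ∈ P, ∑ m ∈ Finset.Ioc K (K + (M : ℤ)),
            ((α p.2 p.1 * (starRingEnd ℂ) (α q.2 q.1)) *
              e (((p.2 : ℝ) / (p.1 : ℝ) ^ k - (q.2 : ℝ) / (q.1 : ℝ) ^ k) * m)).re := by
      rw [Finset.sum_congr rfl (fun m _ => hexpand m), Finset.sum_comm]
      exact Finset.sum_congr rfl (fun p _ => Finset.sum_comm)
    rw [h0, Finset.mul_sum]
    apply Finset.sum_le_sum
    intro p hp
    rw [Finset.mul_sum]
    apply Finset.sum_le_sum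
    intro q hq
    rw [← Complex.re_sum, ← Finset.mul_sum]
    apply (Complex.re_le_norm _).trans
    rw [norm_mul, norm_mul, Complex.norm_conj]
    obtain ⟨hp1, hp2, hp3, hp4, hp5⟩ := hmemP p hp
    obtain ⟨hq1, hq2, hq3, hq4, hq5⟩ := hmemP q hq
    have h1 : ‖α p.2 p.1‖ ≤ A := hα p.1 p.2 hp1 hp2 hp3 hp4 hp5
    have h2 : ‖α q.2 q.1‖ ≤ A := hα q.1 q.2 hq1 hq2 hq3 hq4 hq5
    have hTnn : 0 ≤ T p q := norm_nonneg _
    calc ‖α p.2 p.1‖ * ‖α q.2 q.1‖ * T p q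
        ≤ A * A * T p q := by
          apply mul_le_mul_of_nonneg_right _ hTnn
          exact mul_le_mul h1 h2 (norm_nonneg _) hA.le
      _ = A ^ 2 * T p q := by ring
  -- Step 3: diagonal/off-diagonal split
  have hsplit : ∑ p ∈ P, ∑ q ∈ P, T p q
      = (∑ p ∈ P, T p p) + ∑ p ∈ P, ∑ q ∈ P, (if p = q then 0 else T p q) := by
    rw [← Finset.sum_add_distrib]
    apply Finset.sum_congr rfl
    intro p hp
    have h1 : ∑ q ∈ P, T p q
        = ∑ q ∈ P, ((if p = q then T p q else 0) + (if p = q then 0 else T p q)) := by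
      apply Finset.sum_congr rfl
      intro q _
      by_cases h : p = q <;> simp [h]
    rw [h1, Finset.sum_add_distrib, Finset.sum_ite_eq P p (fun q => T p q), if_pos hp]
  -- diagonal value
  have hdiag : ∀ p ∈ P, T p p = (M : ℝ) := by
    intro p _
    rw [hT]
    simp only [sub_self]
    have h2 : ∀ m ∈ Finset.Ioc K (K + (M : ℤ)), e ((0 : ℝ) * (m : ℝ)) = 1 := by
      intro m _; rw [zero_mul, e_zero]
    rw [Finset.sum_congr rfl h2, Finset.sum_const, Int.card_Ioc]
    simp
  have hcardP : P.card ≤ N ^ (k + 1) := by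
    rw [hP, Finset.card_sigma]
    calc ∑ n ∈ Finset.Icc 1 N, (F n).card
        ≤ ∑ n ∈ Finset.Icc 1 N, N ^ k := by
          apply Finset.sum_le_sum
          intro n hn
          rw [Finset.mem_Icc] at hn
          calc (F n).card ≤ (Finset.Icc 1 (n ^ k)).card := by
                rw [hF]; exact Finset.card_filter_le _ _
            _ = n ^ k := by rw [Nat.card_Icc]; omega
            _ ≤ N ^ k := Nat.pow_le_pow_left hn.2 k
      _ = N * N ^ k := by
          rw [Finset.sum_const, Nat.card_Icc, smul_eq_mul]
          norm_num
      _ = N ^ (k + 1) := by ring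
  have hdiagsum : ∑ p ∈ P, T p p ≤ (N : ℝ) ^ (k + 1) * M := by
    rw [Finset.sum_congr rfl hdiag, Finset.sum_const, nsmul_eq_mul]
    apply mul_le_mul_of_nonneg_right _ (by positivity)
    exact_mod_cast hcardP
  -- Step 4: off-diagonal bound
  have hoffsum : ∑ p ∈ P, ∑ q ∈ P, (if p = q then 0 else T p q)
      ≤ (N : ℝ) * ((N : ℝ) *
        (2 * ((N : ℝ) ^ k * (N : ℝ) ^ k) * (1 + Real.log ((N : ℝ) ^ k * (N : ℝ) ^ k)))) := by
    have h1 : ∑ p ∈ P, ∑ q ∈ P, (if p = q then 0 else T p q)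
        = ∑ n ∈ Finset.Icc 1 N, ∑ n' ∈ Finset.Icc 1 N, ∑ a ∈ F n, ∑ a' ∈ F n',
            (if n = n' ∧ a = a' then 0 else T ⟨n, a⟩ ⟨n', a'⟩) := by
      rw [hP, Finset.sum_sigma]
      apply Finset.sum_congr rfl
      intro n _
      have hinner : ∀ a : ℕ, ∑ q ∈ P, (if (⟨n, a⟩ : Σ _ : ℕ, ℕ) = q then (0 : ℝ) else T ⟨n, a⟩ q)
          = ∑ n' ∈ Finset.Icc 1 N, ∑ a' ∈ F n',
              (if (⟨n, a⟩ : Σ _ : ℕ, ℕ) = ⟨n', a'⟩ then (0 : ℝ) else T ⟨n, a⟩ ⟨n', a'⟩) := by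
        intro a
        rw [hP, Finset.sum_sigma]
      rw [Finset.sum_congr rfl (fun a _ => hinner a), Finset.sum_comm]
      apply Finset.sum_congr rfl
      intro n' _
      apply Finset.sum_congr rfl
      intro a _
      apply Finset.sum_congr rfl
      intro a' _
      apply if_congr _ rfl rfl
      constructor
      · intro h
        exact ⟨congrArg Sigma.fst h, by cases h; rfl⟩
      · rintro ⟨rfl, rfl⟩; rfl
    rw [h1]
    have hNN : (1 : ℝ) ≤ (N : ℝ) ^ k * (N : ℝ) ^ k := by
      have : (1 : ℝ) ≤ (N : ℝ) := by exact_mod_cast (by omega : 1 ≤ N)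
      have h2 : (1 : ℝ) ≤ (N : ℝ) ^ k := one_le_pow₀ this
      nlinarith
    calc ∑ n ∈ Finset.Icc 1 N, ∑ n' ∈ Finset.Icc 1 N, ∑ a ∈ F n, ∑ a' ∈ F n',
            (if n = n' ∧ a = a' then 0 else T ⟨n, a⟩ ⟨n', a'⟩)
        ≤ ∑ n ∈ Finset.Icc 1 N, ∑ n' ∈ Finset.Icc 1 N,
            2 * ((N : ℝ) ^ k * (N : ℝ) ^ k) * (1 + Real.log ((N : ℝ) ^ k * (N : ℝ) ^ k)) := by
          apply Finset.sum_le_sum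
          intro n hn
          apply Finset.sum_le_sum
          intro n' hn'
          rw [Finset.mem_Icc] at hn hn'
          have hbase := inner_off_bound k hk K M n n' hn.1 hn'.1
          apply hbase.trans
          -- monotonicity in (n, n')
          have h1n : (1 : ℝ) ≤ (n : ℝ) ^ k * (n' : ℝ) ^ k := by
            have e1 : (1 : ℝ) ≤ (n : ℝ) := by exact_mod_cast hn.1
            have e2 : (1 : ℝ) ≤ (n' : ℝ) := by exact_mod_cast hn'.1
            have e3 : (1 : ℝ) ≤ (n : ℝ) ^ k := one_le_pow₀ e1
            have e4 : (1 : ℝ) ≤ (n' : ℝ) ^ k := one_le_pow₀ e2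
            nlinarith
          have hle : (n : ℝ) ^ k * (n' : ℝ) ^ k ≤ (N : ℝ) ^ k * (N : ℝ) ^ k := by
            have e1 : (n : ℝ) ≤ (N : ℝ) := by exact_mod_cast hn.2
            have e2 : (n' : ℝ) ≤ (N : ℝ) := by exact_mod_cast hn'.2
            have e3 : (0 : ℝ) ≤ (n : ℝ) := by positivity
            have e4 : (0 : ℝ) ≤ (n' : ℝ) := by positivity
            have e5 := pow_le_pow_left₀ e3 e1 k
            have e6 := pow_le_pow_left₀ e4 e2 k
            have e7 : (0 : ℝ) ≤ (n : ℝ) ^ k := by positivity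
            have e8 : (0 : ℝ) ≤ (N : ℝ) ^ k := by positivity
            nlinarith
          have hlog : Real.log ((n : ℝ) ^ k * (n' : ℝ) ^ k)
              ≤ Real.log ((N : ℝ) ^ k * (N : ℝ) ^ k) :=
            Real.log_le_log (by linarith) hle
          have hlog0 : 0 ≤ Real.log ((n : ℝ) ^ k * (n' : ℝ) ^ k) := Real.log_nonneg h1n
          nlinarith
      _ = (N : ℝ) * ((N : ℝ) *
            (2 * ((N : ℝ) ^ k * (N : ℝ) ^ k) * (1 + Real.log ((N : ℝ) ^ k * (N : ℝ) ^ k)))) := by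
          rw [Finset.sum_const, Finset.sum_const, Nat.card_Icc, nsmul_eq_mul, nsmul_eq_mul]
          push_cast
          ring
  -- Step 5: numeric assembly
  have hNR1 : (1 : ℝ) ≤ (N : ℝ) := by exact_mod_cast (by omega : 1 ≤ N)
  have ht1 : (1 : ℝ) ≤ (N : ℝ) ^ ε := Real.one_le_rpow hNR1 hε.le
  have hL0 : 0 ≤ Real.log N := Real.log_nonneg hNR1
  have hLε : ε * Real.log N ≤ (N : ℝ) ^ ε := by
    have h := log_le_rpow_div (x := (N : ℝ)) hNR1 hε
    rw [le_div_iff₀ hε] at h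
    linarith
  set X : ℝ := (N : ℝ) ^ (2 * k + 2) with hX
  set Y : ℝ := (M : ℝ) * (N : ℝ) ^ (k + 1) with hY
  set t : ℝ := (N : ℝ) ^ ε with htdef
  set L : ℝ := Real.log N with hLdef
  have hX0 : (0 : ℝ) ≤ X := by rw [hX]; positivity
  have hY0 : (0 : ℝ) ≤ Y := by rw [hY]; positivity
  have hsimp : (N : ℝ) * ((N : ℝ) *
      (2 * ((N : ℝ) ^ k * (N : ℝ) ^ k) * (1 + Real.log ((N : ℝ) ^ k * (N : ℝ) ^ k))))
      = 2 * X * (1 + 2 * (k : ℝ) * L) := by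
    have hpow : (N : ℝ) ^ k * (N : ℝ) ^ k = (N : ℝ) ^ (2 * k) := by
      rw [← pow_add]; congr 1; ring
    rw [hpow, Real.log_pow, hX, hLdef]
    push_cast
    ring
  have hinner : Y + 2 * X * (1 + 2 * (k : ℝ) * L) ≤ (3 + 4 * (k : ℝ) / ε) * (X + Y) * t := by
    have h3 : 4 * (k : ℝ) * (X * L) ≤ (4 * (k : ℝ) / ε) * (X * t) := by
      have h3a : X * (ε * L) ≤ X * t := mul_le_mul_of_nonneg_left hLε hX0
      have hk0 : (0 : ℝ) ≤ 4 * (k : ℝ) / ε := by positivity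
      calc 4 * (k : ℝ) * (X * L) = (4 * (k : ℝ) / ε) * (X * (ε * L)) := by
            field_simp
        _ ≤ (4 * (k : ℝ) / ε) * (X * t) := mul_le_mul_of_nonneg_left h3a hk0
    exact assemble_ineq (k : ℝ) X Y t L (4 * (k : ℝ) / ε) (by positivity) hX0 hY0 ht1 hL0
      (by positivity) h3
  -- put everything together
  calc ∑ m ∈ Finset.Ioc K (K + (M : ℤ)),
        ‖∑ n ∈ Finset.Icc 1 N, ∑ a ∈ F n,
          α a n * e ((a : ℝ) * (m : ℝ) / (n : ℝ) ^ k)‖ ^ 2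
      ≤ A ^ 2 * ∑ p ∈ P, ∑ q ∈ P, T p q := hstep2
    _ = A ^ 2 * ((∑ p ∈ P, T p p) + ∑ p ∈ P, ∑ q ∈ P, (if p = q then 0 else T p q)) := by
        rw [hsplit]
    _ ≤ A ^ 2 * (((N : ℝ) ^ (k + 1) * M) + (N : ℝ) * ((N : ℝ) *
          (2 * ((N : ℝ) ^ k * (N : ℝ) ^ k) * (1 + Real.log ((N : ℝ) ^ k * (N : ℝ) ^ k))))) := by
        apply mul_le_mul_of_nonneg_left _ (by positivity)
        exact add_le_add hdiagsum hoffsum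
    _ = A ^ 2 * (Y + 2 * X * (1 + 2 * (k : ℝ) * L)) := by
        rw [hsimp, hY]
        ring
    _ ≤ A ^ 2 * ((3 + 4 * (k : ℝ) / ε) * (X + Y) * t) :=
        mul_le_mul_of_nonneg_left hinner (by positivity)
    _ = (3 + 4 * (k : ℝ) / ε) * ((N : ℝ) ^ (2 * k + 2) + (M : ℝ) * (N : ℝ) ^ (k + 1)) *
          (N : ℝ) ^ ε * A ^ 2 := by
        rw [hX, hY, htdef]
        ring
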